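/- Let g(k) = 1 if |k| < 1/2 and g(k) = 0 otherwise, let φ(k) = 0 for |k| ≤ 1/2 and φ(k) = 1/(2πik) for |k| > 1/2, and let G(k) be the 2×2 complex matrix with rows (g(k), −2πik·g(k)) and (φ(k), g(k)). Then for every real τ, (1/2)·∫_ℝ Tr( G(k)·G(k+τ) ) dk = 1 − 2|τ| + |τ|·log(1 + 2|τ|) if |τ| ≤ 1, and = −1 + |τ|·log((2|τ|+1)/(2|τ|−1)) if |τ| ≥ 1. -/

import Mathlib

open MeasureTheory Real Matrix

/-- The indicator `g(k)` of `(-1/2, 1/2)`, as a complex number. -/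
noncomputable def gIndC (k : ℝ) : ℂ :=
  if |k| < 1/2 then 1 else 0

/-- `φ(k) = 0` for `|k| ≤ 1/2` and `φ(k) = 1/(2πik)` for `|k| > 1/2`. -/
noncomputable def phiF (k : ℝ) : ℂ :=
  if |k| ≤ 1/2 then 0 else 1 / (2 * Real.pi * Complex.I * k)

/-- The entrywise Fourier transform `G(k)` of the GOE 2×2 matrix sine kernel:
rows `(g(k), −2πik·g(k))` and `(φ(k), g(k))`. -/
noncomputable def Gmat (k : ℝ) : Matrix (Fin 2) (Fin 2) ℂ :=
  !![gIndC k, -(2 * Real.pi * Complex.I * k) * gIndC k; phiF k, gIndC k]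

/-!
Since `2πi·a·φ(b) = (a/b)·[|b| > 1/2]`, the factors `2πi` cancel and the trace of `G(k)G(k+τ)` is
the real function `2 g(k) g(k+τ) − (k/(k+τ)) g(k) χ(k+τ) − ((k+τ)/k) χ(k) g(k+τ)`, with `χ` the
indicator of `|x| > 1/2`. The substitution `k ↦ −(k+τ)` exchanges the two cross terms and
`k ↦ −k` exchanges `τ` and `−τ`, so one may take `τ ≥ 0`. Then the diagonal term integrates to
`2 (1 − τ)₊`, and each cross term is the integral of `k/(k+τ) = 1 − τ/(k+τ)` over
`(max (1/2 − τ) (−1/2), 1/2)`, which produces the logarithms.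
-/
noncomputable def innerInd (x : ℝ) : ℝ := if |x| < 1/2 then 1 else 0
noncomputable def outerInd (x : ℝ) : ℝ := if 1/2 < |x| then 1 else 0

noncomputable def crossTerm (t k : ℝ) : ℝ := k / (k + t) * innerInd k * outerInd (k + t)

noncomputable def traceDensity (t k : ℝ) : ℝ :=
  2 * (innerInd k * innerInd (k + t)) - crossTerm t k - crossTerm t (-(k + t))

lemma innerInd_neg (x : ℝ) : innerInd (-x) = innerInd x := by
  simp only [innerInd, abs_neg]

lemma outerInd_neg (x : ℝ) : outerInd (-x) = outerInd x := by
  simp only [outerInd, abs_neg]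

lemma gIndC_eq_innerInd (x : ℝ) : gIndC x = innerInd x := by
  unfold gIndC innerInd; split_ifs <;> simp

lemma two_pi_I_mul_phiF (a b : ℝ) :
    2 * π * Complex.I * a * phiF b = ((a / b * outerInd b : ℝ) : ℂ) := by
  unfold phiF outerInd
  split_ifs with h₁ h₂ h₂
  · linarith
  · simp
  · have hb : (b : ℂ) ≠ 0 := by
      have : b ≠ 0 := by rintro rfl; norm_num at h₂
      exact_mod_cast this
    push_cast
    field_simp
  · exact absurd (lt_of_not_ge h₁) h₂

lemma trace_Gmat_mul (t k : ℝ) :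
    (Gmat k * Gmat (k + t)).trace = (traceDensity t k : ℂ) := by
  have h₁ := two_pi_I_mul_phiF k (k + t)
  have h₂ := two_pi_I_mul_phiF (k + t) k
  have hexpand : (Gmat k * Gmat (k + t)).trace = 2 * gIndC k * gIndC (k + t)
      - 2 * π * Complex.I * k * phiF (k + t) * gIndC k
      - 2 * π * Complex.I * ((k + t : ℝ) : ℂ) * phiF k * gIndC (k + t) := by
    rw [Gmat, Gmat, mul_fin_two, trace_fin_two_of]
    ring
  rw [hexpand, h₁, h₂, gIndC_eq_innerInd, gIndC_eq_innerInd, traceDensity, crossTerm, crossTerm,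
    show -(k + t) + t = -k by ring, innerInd_neg, outerInd_neg, neg_div_neg_eq]
  push_cast
  ring

lemma crossTerm_neg (t k : ℝ) : crossTerm (-t) k = crossTerm t (-k) := by
  rw [crossTerm, crossTerm, show -k + t = -(k + -t) by ring, innerInd_neg, outerInd_neg,
    neg_div_neg_eq]

lemma traceDensity_neg (t k : ℝ) : traceDensity (-t) k = traceDensity t (-k) := by
  have e : -k + t = -(k + -t) := by ring
  simp only [traceDensity, crossTerm_neg, e, innerInd_neg, neg_neg]

lemma integral_traceDensity_abs (t : ℝ) : ∫ k, traceDensity |t| k = ∫ k, traceDensity t k := by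
  rcases abs_choice t with h | h
  · rw [h]
  · simp only [h, traceDensity_neg]
    exact integral_neg_eq_self (traceDensity t) volume

lemma innerInd_mul_innerInd_add {t : ℝ} (ht : 0 ≤ t) (k : ℝ) :
    innerInd k * innerInd (k + t) = (Set.Ioo (-(1/2)) (1/2 - t)).indicator 1 k := by
  simp only [innerInd, Set.indicator, Set.mem_Ioo, abs_lt, Pi.one_apply]
  split_ifs <;> norm_num <;> grind

lemma crossTerm_eq_indicator {t : ℝ} (ht : 0 ≤ t) :
    crossTerm t = (Set.Ioo (max (1/2 - t) (-(1/2))) (1/2)).indicator (fun k => k / (k + t)) := by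
  ext k
  simp only [crossTerm, innerInd, outerInd, Set.indicator, Set.mem_Ioo, abs_lt, lt_abs, max_lt_iff]
  split_ifs <;> simp <;> grind

lemma integrable_innerInd_mul_innerInd_add {t : ℝ} (ht : 0 ≤ t) :
    Integrable fun k => innerInd k * innerInd (k + t) := by
  simp only [innerInd_mul_innerInd_add ht]
  exact (integrable_indicator_iff measurableSet_Ioo).2 (integrableOn_const measure_Ioo_lt_top.ne)

lemma integral_innerInd_mul_innerInd_add {t : ℝ} (ht : 0 ≤ t) :
    ∫ k, innerInd k * innerInd (k + t) = max (1 - t) 0 := by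
  simp only [innerInd_mul_innerInd_add ht]
  rw [integral_indicator_one measurableSet_Ioo, Real.volume_real_Ioo]
  ring_nf

lemma integral_div_add_eq_sub_log {a b t : ℝ} (h : ∀ x ∈ Set.uIcc a b, 0 < x + t) :
    ∫ x in a..b, x / (x + t) = (b - t * Real.log (b + t)) - (a - t * Real.log (a + t)) := by
  have hne : ∀ x ∈ Set.uIcc a b, x + t ≠ 0 := fun x hx => (h x hx).ne'
  apply intervalIntegral.integral_eq_sub_of_hasDerivAt
  · intro x hx
    have hlog : HasDerivAt (fun y => Real.log (y + t)) (1 / (x + t)) x := by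
      simpa using ((hasDerivAt_id' x).add_const t).log (hne x hx)
    refine ((hasDerivAt_id' x).sub (hlog.const_mul t)).congr_deriv ?_
    field_simp [hne x hx]
    ring
  · exact (continuousOn_id.div (by fun_prop) hne).intervalIntegrable

lemma integrable_crossTerm {t : ℝ} (ht : 0 ≤ t) : Integrable (crossTerm t) := by
  rw [crossTerm_eq_indicator ht, integrable_indicator_iff measurableSet_Ioo]
  refine (ContinuousOn.integrableOn_Icc ?_).mono_set Set.Ioo_subset_Icc_self
  refine continuousOn_id.div (by fun_prop) fun x hx => ?_
  linarith [le_max_left (1/2 - t) (-(1/2)), hx.1]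

lemma integral_crossTerm {t : ℝ} (ht : 0 ≤ t) :
    ∫ k, crossTerm t k = (1/2 - t * Real.log (1/2 + t))
      - (max (1/2 - t) (-(1/2)) - t * Real.log (max (1/2 - t) (-(1/2)) + t)) := by
  have ha : max (1/2 - t) (-(1/2)) ≤ 1/2 := max_le (by linarith) (by norm_num)
  rw [crossTerm_eq_indicator ht, integral_indicator measurableSet_Ioo,
    ← integral_Ioc_eq_integral_Ioo, ← intervalIntegral.integral_of_le ha]
  refine integral_div_add_eq_sub_log fun x hx => ?_
  rw [Set.uIcc_of_le ha] at hx
  linarith [le_max_left (1/2 - t) (-(1/2)), hx.1]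

lemma integral_crossTerm_neg_add (t : ℝ) : ∫ k, crossTerm t (-(k + t)) = ∫ k, crossTerm t k := by
  rw [integral_add_right_eq_self (fun k => crossTerm t (-k)) t]
  exact integral_neg_eq_self (crossTerm t) volume

lemma integral_traceDensity {t : ℝ} (ht : 0 ≤ t) :
    ∫ k, traceDensity t k = 2 * max (1 - t) 0 - 2 * ((1/2 - t * Real.log (1/2 + t))
      - (max (1/2 - t) (-(1/2)) - t * Real.log (max (1/2 - t) (-(1/2)) + t))) := by
  have h₁ := (integrable_innerInd_mul_innerInd_add ht).const_mul 2
  have h₂ := integrable_crossTerm ht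
  have h₃ : Integrable fun k => crossTerm t (-(k + t)) := h₂.comp_neg.comp_add_right t
  have h₁₂ : Integrable fun k => 2 * (innerInd k * innerInd (k + t)) - crossTerm t k := h₁.sub h₂
  simp only [traceDensity]
  rw [integral_sub h₁₂ h₃, integral_sub h₁ h₂, integral_crossTerm_neg_add,
    integral_const_mul, integral_innerInd_mul_innerInd_add ht, integral_crossTerm ht]
  ring

lemma integral_traceDensity_of_le_one {t : ℝ} (ht₀ : 0 ≤ t) (ht₁ : t ≤ 1) :
    ∫ k, traceDensity t k = 2 * (1 - 2 * t + t * Real.log (1 + 2 * t)) := by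
  have hlog : Real.log (1 + 2 * t) = Real.log (1/2 + t) - Real.log (1/2) := by
    rw [← Real.log_div (by linarith) (by norm_num)]
    ring_nf
  rw [integral_traceDensity ht₀, max_eq_left (by linarith), max_eq_left (by linarith),
    show 1/2 - t + t = 1/2 by ring, hlog]
  ring

lemma integral_traceDensity_of_one_le {t : ℝ} (ht : 1 ≤ t) :
    ∫ k, traceDensity t k = 2 * (-1 + t * Real.log ((2 * t + 1) / (2 * t - 1))) := by
  rw [integral_traceDensity (by linarith), max_eq_right (by linarith), max_eq_right (by linarith),
    show -(1/2) + t = t - 1/2 by ring,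
    show (2 * t + 1) / (2 * t - 1) = (1/2 + t) / (t - 1/2) by field_simp; ring,
    Real.log_div (by linarith) (by linarith)]
  ring

theorem goe_matrix_kernel_form_factor (τ : ℝ) :
    (|τ| ≤ 1 →
      (1/2 : ℂ) * (∫ k : ℝ, (Gmat k * Gmat (k + τ)).trace)
        = ((1 - 2 * |τ| + |τ| * Real.log (1 + 2 * |τ|) : ℝ) : ℂ)) ∧
    (1 ≤ |τ| →
      (1/2 : ℂ) * (∫ k : ℝ, (Gmat k * Gmat (k + τ)).trace)
        = ((-1 + |τ| * Real.log ((2 * |τ| + 1) / (2 * |τ| - 1)) : ℝ) : ℂ)) := by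
  have key : ∫ k : ℝ, (Gmat k * Gmat (k + τ)).trace = ((∫ k, traceDensity |τ| k : ℝ) : ℂ) := by
    simp only [trace_Gmat_mul, integral_complex_ofReal, integral_traceDensity_abs]
  refine ⟨fun h => ?_, fun h => ?_⟩
  · rw [key, integral_traceDensity_of_le_one (abs_nonneg τ) h]
    push_cast
    ring
  · rw [key, integral_traceDensity_of_one_le h]
    push_cast
    ring
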